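/- There exists ε₀ > 0 such that for every ε ∈ (0, ε₀) and every n ≥ 1 the following holds. Let Ω = { x ∈ ℝⁿ : 1/2 < ‖x‖ < 1 + ε } and let F : Ω → ℝ be a (1+ε)-Lipschitz, (−1+ε)-concave function satisfying −(1 − ε³)·‖x‖²/2 ≥ F(x) ≥ −(1 + ε³)·‖x‖²/2 for all x ∈ Ω. Then the set C := { x ∈ ℝⁿ : ‖x‖ ≤ 1/2 } ∪ { x ∈ Ω : F(x) ≥ −1/2 } is a convex subset of ℝⁿ. -/

import Mathlib

/-- A unit-speed geodesic (on `[a,b]`) in a metric space. -/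
def IsUnitSpeedGeodesic {X : Type*} [MetricSpace X] (γ : ℝ → X) (a b : ℝ) : Prop :=
  ∀ s ∈ Set.Icc a b, ∀ t ∈ Set.Icc a b, dist (γ s) (γ t) = |s - t|

/-- `f` is `λ`-concave on `Ω`: along every unit-speed geodesic with image in `Ω`,
`t ↦ f (γ t) - (λ/2) t²` is concave. In Euclidean space unit-speed geodesics are
exactly unit-speed parametrized line segments. -/
def LambdaConcaveOn {X : Type*} [MetricSpace X] (lam : ℝ) (f : X → ℝ) (Ω : Set X) : Prop :=
  ∀ (γ : ℝ → X) (a b : ℝ), a ≤ b → IsUnitSpeedGeodesic γ a b →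
    (∀ t ∈ Set.Icc a b, γ t ∈ Ω) →
    ConcaveOn ℝ (Set.Icc a b) (fun t => f (γ t) - lam / 2 * t ^ 2)

/-!
With `r = 1 / (1 + ε³) > 1/2`, the lower bound `F x ≥ -(1 + ε³)‖x‖²/2` already gives `F x ≥ -1/2`
on the part `‖x‖ ≤ r` of the annulus, so the set is the closed ball of radius `r` together with
the superlevel set `{F ≥ -1/2}`. Given a point `z` of a segment between two points of this union,
cut the segment at the last point of the ball before `z` and the first one after `z`. The
resulting piece lies in the annulus: it is in the closure of the complement of the ball of radius
`r`, and in the open ball of radius `1 + ε` by convexity. Since `λ = -1 + ε ≤ 0`, `F` is concave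
along it, so `F ≥ -1/2` on the piece, in particular at `z`.
-/

open Set AffineMap

theorem convex_union_of_disjoint_openSegment {E : Type*} [AddCommGroup E] [Module ℝ E]
    [TopologicalSpace E] [IsTopologicalAddGroup E] [ContinuousSMul ℝ E] {B D : Set E}
    (hB : IsClosed B)
    (h : ∀ u ∈ B ∪ D, ∀ v ∈ B ∪ D, Disjoint (openSegment ℝ u v) B → segment ℝ u v ⊆ B ∪ D) :
    Convex ℝ (B ∪ D) := by
  refine convex_iff_segment_subset.2 fun x hx y hy z hz => ?_
  rw [segment_eq_image_lineMap] at hz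
  obtain ⟨b, ⟨hb0, hb1⟩, rfl⟩ := hz
  set p : ℝ →ᵃ[ℝ] E := lineMap x y
  by_cases hzB : p b ∈ B
  · exact Or.inl hzB
  have hp : Continuous p := lineMap_continuous
  -- `sSup L` and `sInf R` are the last parameter before `b` and the first one after `b` at which
  -- the segment meets `B`, or the endpoints `0`, `1` if there is none
  set L := {s | s ∈ Icc 0 b ∧ (s = 0 ∨ p s ∈ B)}
  set R := {s | s ∈ Icc b 1 ∧ (s = 1 ∨ p s ∈ B)}
  have hLbdd : BddAbove L := ⟨b, fun s hs => hs.1.2⟩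
  have hRbdd : BddBelow R := ⟨b, fun s hs => hs.1.1⟩
  obtain ⟨⟨ha0, hab⟩, ha⟩ : sSup L ∈ L :=
    (isClosed_Icc.inter (isClosed_singleton.union (hB.preimage hp))).csSup_mem
      ⟨0, ⟨le_rfl, hb0⟩, Or.inl rfl⟩ hLbdd
  obtain ⟨⟨hbc, hc1⟩, hc⟩ : sInf R ∈ R :=
    (isClosed_Icc.inter (isClosed_singleton.union (hB.preimage hp))).csInf_mem
      ⟨1, ⟨hb1, le_rfl⟩, Or.inl rfl⟩ hRbdd
  set a := sSup L
  set c := sInf R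
  have hpa : p a ∈ B ∪ D := by
    rcases ha with ha | ha
    · simpa [p, ha] using hx
    · exact Or.inl ha
  have hpc : p c ∈ B ∪ D := by
    rcases hc with hc | hc
    · simpa [p, hc] using hy
    · exact Or.inl hc
  have hdisj : Disjoint (openSegment ℝ (p a) (p c)) B := by
    rw [← image_openSegment, Set.disjoint_left]
    rintro _ ⟨s, hs, rfl⟩ hsB
    rcases (hab.trans hbc).eq_or_lt with hac | hac
    · rw [hac, openSegment_same, mem_singleton_iff] at hs
      rw [le_antisymm hbc (hac ▸ hab), ← hs] at hzB
      exact hzB hsB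
    · rw [openSegment_eq_Ioo hac] at hs
      rcases le_total s b with hsb | hbs
      · exact (le_csSup hLbdd ⟨⟨ha0.trans hs.1.le, hsb⟩, Or.inr hsB⟩).not_gt hs.1
      · exact (csInf_le hRbdd ⟨⟨hbs, hs.2.le.trans hc1⟩, Or.inr hsB⟩).not_gt hs.2
  refine h _ hpa _ hpc hdisj ?_
  rw [← image_segment, segment_eq_Icc (hab.trans hbc)]
  exact mem_image_of_mem p ⟨hab, hbc⟩

theorem LambdaConcaveOn.min_le_of_mem_segment {E : Type*} [NormedAddCommGroup E]
    [NormedSpace ℝ E] {lam : ℝ} {F : E → ℝ} {Ω : Set E} (hF : LambdaConcaveOn lam F Ω)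
    (hlam : lam ≤ 0) {u v w : E} (huv : segment ℝ u v ⊆ Ω) (hw : w ∈ segment ℝ u v) :
    min (F u) (F v) ≤ F w := by
  rcases eq_or_ne u v with rfl | hne
  · rw [segment_same, mem_singleton_iff] at hw
    rw [hw, min_self]
  set L := dist u v
  have hL : 0 < L := dist_pos.2 hne
  set γ : ℝ → E := fun t => lineMap u v (t / L)
  have hγ : IsUnitSpeedGeodesic γ 0 L := fun s _ t _ => by
    simp [γ, dist_lineMap_lineMap, Real.dist_eq, ← sub_div, abs_div, abs_of_pos hL, hL.ne', L]
  have hγΩ : ∀ t ∈ Icc 0 L, γ t ∈ Ω := fun t ht => huv <| by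
    rw [segment_eq_image_lineMap]
    exact mem_image_of_mem _ ⟨div_nonneg ht.1 hL.le, div_le_one_of_le₀ ht.2 hL.le⟩
  have hq : ConcaveOn ℝ (Icc 0 L) fun t : ℝ => lam / 2 * t ^ 2 :=
    (((convexOn_pow 2).subset Icc_subset_Ici_self (convex_Icc 0 L)).smul
      (by linarith : 0 ≤ -(lam / 2))).neg.congr fun t _ => by
        simp only [Pi.neg_apply, smul_eq_mul]
        ring
  have hconc : ConcaveOn ℝ (Icc 0 L) (F ∘ γ) :=
    ((hF γ 0 L hL.le hγ hγΩ).add hq).congr fun t _ => by simp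
  rw [segment_eq_image_lineMap] at hw
  obtain ⟨θ, ⟨hθ0, hθ1⟩, rfl⟩ := hw
  have := hconc.ge_on_segment (x := 0) (y := L) (z := θ * L) (left_mem_Icc.2 hL.le)
    (right_mem_Icc.2 hL.le) (by
      rw [segment_eq_Icc hL.le]
      exact ⟨by positivity, mul_le_of_le_one_left hL.le hθ1⟩)
  simpa [γ, hL.ne'] using this

theorem convex_closedBall_union_superlevel {E : Type*} [NormedAddCommGroup E] [NormedSpace ℝ E]
    {r₀ r R lam c : ℝ} {F : E → ℝ} (hr₀ : r₀ < r) (hr : r < R) (hlam : lam ≤ 0)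
    (hF : LambdaConcaveOn lam F {x | r₀ < ‖x‖ ∧ ‖x‖ < R})
    (hc : ∀ x, r₀ < ‖x‖ → ‖x‖ ≤ r → c ≤ F x) :
    Convex ℝ ({x | ‖x‖ ≤ r₀} ∪ {x | (r₀ < ‖x‖ ∧ ‖x‖ < R) ∧ c ≤ F x}) := by
  set D := {x | (r₀ < ‖x‖ ∧ ‖x‖ < R) ∧ c ≤ F x}
  set Ω := {x : E | r₀ < ‖x‖ ∧ ‖x‖ < R}
  set B := {x : E | ‖x‖ ≤ r}
  have hBD : B ∪ D ⊆ Metric.ball 0 R := by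
    rintro x (hxB | ⟨⟨-, hx⟩, -⟩) <;> rw [mem_ball_zero_iff]
    exacts [lt_of_le_of_lt hxB hr, hx]
  have hcF : ∀ x ∈ Ω, x ∈ B ∪ D → c ≤ F x := by
    rintro x hx (hxB | ⟨-, hxD⟩)
    exacts [hc x hx.1 hxB, hxD]
  have hC : {x | ‖x‖ ≤ r₀} ∪ D = B ∪ D := by
    refine union_congr_right (fun x (hx : ‖x‖ ≤ r₀) => Or.inl (hx.trans hr₀.le)) fun x hxB => ?_
    by_cases hx : ‖x‖ ≤ r₀
    · exact Or.inl hx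
    · have hxΩ : x ∈ Ω := ⟨not_le.1 hx, mem_ball_zero_iff.1 (hBD (Or.inl hxB))⟩
      exact Or.inr ⟨hxΩ, hcF x hxΩ (Or.inl hxB)⟩
  rw [hC]
  refine convex_union_of_disjoint_openSegment (isClosed_le continuous_norm continuous_const)
    fun u hu v hv hdisj => ?_
  have hΩ : segment ℝ u v ⊆ Ω := fun w hw => by
    have hBc : closure Bᶜ ⊆ {x | r ≤ ‖x‖} := by
      simpa only [B, compl_ofPred, not_le] using closure_lt_subset_le continuous_const continuous_norm
    refine ⟨hr₀.trans_le (hBc (closure_mono hdisj.subset_compl_right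
      (segment_subset_closure_openSegment hw))), ?_⟩
    exact mem_ball_zero_iff.1 ((convex_ball 0 R).segment_subset (hBD hu) (hBD hv) hw)
  exact fun w hw => Or.inr ⟨hΩ hw, (le_min (hcF u (hΩ (left_mem_segment ℝ u v)) hu)
    (hcF v (hΩ (right_mem_segment ℝ u v)) hv)).trans (hF.min_le_of_mem_segment hlam hΩ hw)⟩

/-- The sublevel set of a strictly concave approximation of `-‖x‖²/2` on the annulus
`{1/2 < ‖x‖ < 1 + ε}`, together with the closed ball of radius `1/2`, is convex. -/
theorem convex_region : ∃ ε₀ : ℝ, 0 < ε₀ ∧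
    ∀ ε : ℝ, 0 < ε → ε < ε₀ → ∀ n : ℕ, 1 ≤ n →
    ∀ F : EuclideanSpace ℝ (Fin n) → ℝ,
      (∀ x ∈ {x : EuclideanSpace ℝ (Fin n) | 1 / 2 < ‖x‖ ∧ ‖x‖ < 1 + ε},
        ∀ y ∈ {x : EuclideanSpace ℝ (Fin n) | 1 / 2 < ‖x‖ ∧ ‖x‖ < 1 + ε},
          |F x - F y| ≤ (1 + ε) * dist x y) →
      LambdaConcaveOn (-1 + ε) F {x : EuclideanSpace ℝ (Fin n) | 1 / 2 < ‖x‖ ∧ ‖x‖ < 1 + ε} →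
      (∀ x ∈ {x : EuclideanSpace ℝ (Fin n) | 1 / 2 < ‖x‖ ∧ ‖x‖ < 1 + ε},
        -(1 - ε ^ 3) * ‖x‖ ^ 2 / 2 ≥ F x ∧ F x ≥ -(1 + ε ^ 3) * ‖x‖ ^ 2 / 2) →
      Convex ℝ ({x : EuclideanSpace ℝ (Fin n) | ‖x‖ ≤ 1 / 2} ∪
        {x : EuclideanSpace ℝ (Fin n) | (1 / 2 < ‖x‖ ∧ ‖x‖ < 1 + ε) ∧ F x ≥ -(1 / 2)}) := by
  refine ⟨1, one_pos, fun ε hε hε1 n _ F _ hconc hbnd => ?_⟩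
  have hε3 : 0 < ε ^ 3 ∧ ε ^ 3 < 1 := ⟨pow_pos hε 3, pow_lt_one₀ hε.le hε1 (by norm_num)⟩
  have h1ε : 0 < 1 + ε ^ 3 := by linarith
  refine convex_closedBall_union_superlevel (r := 1 / (1 + ε ^ 3)) ?_ ?_ (by linarith) hconc
    fun x hx₀ hx => ?_
  · rw [lt_div_iff₀ h1ε]
    linarith
  · rw [div_lt_iff₀ h1ε]
    nlinarith
  · have hx' : (1 + ε ^ 3) * ‖x‖ ≤ 1 := (le_div_iff₀' h1ε).1 hx
    have hx1 : ‖x‖ < 1 + ε := by nlinarith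
    nlinarith [(hbnd x ⟨hx₀, hx1⟩).2, mul_le_mul_of_nonneg_right hx' (norm_nonneg x)]
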